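/- arXiv:2509.21608 — 4 statements merged into one kernel-verified Lean document; each statement's English description precedes it below -/
import Mathlib

section
/- Let w : (0,∞) → (0,∞) be continuous with w and w⁻¹ locally integrable on ℝ⁺, and suppose sup_{s ≥ t} w(s−t)/w(s) < ∞ for every t ≥ 0. Then for every x ≥ 0 the point evaluation f ↦ f(x) is a bounded linear functional on the weighted Sobolev space H¹_w(ℝ⁺) = {f ∈ L²_w : f weakly differentiable, f' ∈ L²_w}; i.e. there is a constant C_x such that |f(x)| ≤ C_x (‖f‖_{L²_w} + ‖f'‖_{L²_w}) for all f ∈ H¹_w. -/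
/-!
For `y ∈ (x, x + 1]` we have `|f x| ≤ |f y| + ∫_{(x, x+1]} |f'|`, and averaging over `y` gives
`|f x| ≤ ∫_{(x, x+1]} |f| + ∫_{(x, x+1]} |f'|`. Writing `|g| = (|g| √w) · (1 / √w)`, the
Cauchy–Schwarz inequality bounds `∫_{(x, x+1]} |g|` by `‖g‖_{L²_w} · (∫_{(x, x+1]} w⁻¹)^{1/2}`,
and the last factor is finite because `w⁻¹` is locally integrable.
-/

open MeasureTheory Set

section WeightedCauchySchwarz

variable {α : Type*} [MeasurableSpace α] {μ : Measure α}

theorem integral_mul_le_sqrt_integral_sq_mul_sqrt_integral_sq {f g : α → ℝ}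
    (hf_nonneg : 0 ≤ᵐ[μ] f) (hg_nonneg : 0 ≤ᵐ[μ] g) (hf : MemLp f 2 μ) (hg : MemLp g 2 μ) :
    ∫ a, f a * g a ∂μ ≤ √(∫ a, f a ^ 2 ∂μ) * √(∫ a, g a ^ 2 ∂μ) := by
  have h := integral_mul_le_Lp_mul_Lq_of_nonneg Real.HolderConjugate.two_two hf_nonneg hg_nonneg
    (by simpa using hf) (by simpa using hg)
  simpa [Real.sqrt_eq_rpow, Real.rpow_two] using h

variable {w g : α → ℝ}

theorem memLp_two_abs_mul_sqrt_weight (hw : 0 ≤ᵐ[μ] w)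
    (hwinv : Integrable (fun a => (w a)⁻¹) μ) (hg : AEStronglyMeasurable g μ)
    (hgw : Integrable (fun a => g a ^ 2 * w a) μ) :
    MemLp (fun a => |g a| * √(w a)) 2 μ := by
  have hw_meas : AEStronglyMeasurable w μ := by
    convert hwinv.aestronglyMeasurable.aemeasurable.inv.aestronglyMeasurable using 1
    ext a
    simp
  refine (memLp_two_iff_integrable_sq
    (hg.aemeasurable.abs.mul hw_meas.aemeasurable.sqrt).aestronglyMeasurable).2 (hgw.congr ?_)
  filter_upwards [hw] with a ha
  rw [Pi.mul_apply, mul_pow, sq_abs, Real.sq_sqrt ha]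

theorem memLp_two_sqrt_inv_weight (hw : 0 ≤ᵐ[μ] w)
    (hwinv : Integrable (fun a => (w a)⁻¹) μ) :
    MemLp (fun a => √((w a)⁻¹)) 2 μ := by
  refine (memLp_two_iff_integrable_sq
    hwinv.aestronglyMeasurable.aemeasurable.sqrt.aestronglyMeasurable).2 (hwinv.congr ?_)
  filter_upwards [hw] with a ha
  rw [Real.sq_sqrt (inv_nonneg.2 ha)]

theorem abs_eq_abs_mul_sqrt_mul_sqrt_inv {a v : ℝ} (hv : 0 < v) :
    |a| = |a| * √v * √v⁻¹ := by
  rw [mul_assoc, ← Real.sqrt_mul hv.le, mul_inv_cancel₀ hv.ne', Real.sqrt_one, mul_one]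

theorem integrable_abs_of_integrable_sq_mul_weight (hw : ∀ᵐ a ∂μ, 0 < w a)
    (hwinv : Integrable (fun a => (w a)⁻¹) μ) (hg : AEStronglyMeasurable g μ)
    (hgw : Integrable (fun a => g a ^ 2 * w a) μ) :
    Integrable (fun a => |g a|) μ := by
  have hw0 : 0 ≤ᵐ[μ] w := hw.mono fun a ha => ha.le
  refine ((memLp_two_abs_mul_sqrt_weight hw0 hwinv hg hgw).integrable_mul
    (memLp_two_sqrt_inv_weight hw0 hwinv)).congr ?_
  filter_upwards [hw] with a ha
  exact (abs_eq_abs_mul_sqrt_mul_sqrt_inv ha).symm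

theorem integral_abs_le_sqrt_integral_sq_mul_weight (hw : ∀ᵐ a ∂μ, 0 < w a)
    (hwinv : Integrable (fun a => (w a)⁻¹) μ) (hg : AEStronglyMeasurable g μ)
    (hgw : Integrable (fun a => g a ^ 2 * w a) μ) :
    ∫ a, |g a| ∂μ ≤ √(∫ a, g a ^ 2 * w a ∂μ) * √(∫ a, (w a)⁻¹ ∂μ) := by
  have hw0 : 0 ≤ᵐ[μ] w := hw.mono fun a ha => ha.le
  have h := integral_mul_le_sqrt_integral_sq_mul_sqrt_integral_sq
    (Filter.Eventually.of_forall fun a => by positivity)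
    (Filter.Eventually.of_forall fun a => Real.sqrt_nonneg _)
    (memLp_two_abs_mul_sqrt_weight hw0 hwinv hg hgw) (memLp_two_sqrt_inv_weight hw0 hwinv)
  have hg_sq : ∫ a, (|g a| * √(w a)) ^ 2 ∂μ = ∫ a, g a ^ 2 * w a ∂μ :=
    integral_congr_ae (hw0.mono fun a ha => by simp only [mul_pow, sq_abs, Real.sq_sqrt ha])
  have hwinv_sq : ∫ a, √((w a)⁻¹) ^ 2 ∂μ = ∫ a, (w a)⁻¹ ∂μ :=
    integral_congr_ae (hw0.mono fun a ha => Real.sq_sqrt (inv_nonneg.2 ha))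
  calc ∫ a, |g a| ∂μ = ∫ a, |g a| * √(w a) * √((w a)⁻¹) ∂μ :=
        integral_congr_ae (hw.mono fun a ha => abs_eq_abs_mul_sqrt_mul_sqrt_inv ha)
    _ ≤ _ := h
    _ = _ := by rw [hg_sq, hwinv_sq]

end WeightedCauchySchwarz

theorem abs_le_setIntegral_abs_add_setIntegral_abs_deriv {f f' : ℝ → ℝ} {x : ℝ}
    (hftc : ∀ y ∈ Ioc x (x + 1), f y - f x = ∫ s in x..y, f' s)
    (hf : IntegrableOn (fun s => |f s|) (Ioc x (x + 1)))
    (hf' : IntegrableOn (fun s => |f' s|) (Ioc x (x + 1))) :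
    |f x| ≤ (∫ s in Ioc x (x + 1), |f s|) + ∫ s in Ioc x (x + 1), |f' s| := by
  set c := ∫ s in Ioc x (x + 1), |f' s|
  have hpoint : ∀ y ∈ Ioc x (x + 1), |f x| ≤ |f y| + c := by
    intro y hy
    have hxy : x ≤ y := hy.1.le
    calc |f x| ≤ |f y| + |∫ s in x..y, f' s| := by
          rw [← hftc y hy]; simpa using abs_sub (f y) (f y - f x)
      _ ≤ |f y| + ∫ s in Ioc x y, |f' s| := by
          gcongr
          rw [← intervalIntegral.integral_of_le hxy]
          exact intervalIntegral.abs_integral_le_integral_abs hxy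
      _ ≤ |f y| + c := by
          gcongr
          exact setIntegral_mono_set hf' (Filter.Eventually.of_forall fun s => abs_nonneg _)
            (Ioc_subset_Ioc_right hy.2).eventuallyLE
  have hvol : volume.real (Ioc x (x + 1)) = 1 := by simp
  calc |f x| = ∫ _ in Ioc x (x + 1), |f x| := by simp [hvol]
    _ ≤ ∫ s in Ioc x (x + 1), (|f s| + c) :=
        setIntegral_mono_on (integrableOn_const (by simp)) (hf.add (integrableOn_const (by simp)))
          measurableSet_Ioc hpoint
    _ = (∫ s in Ioc x (x + 1), |f s|) + c := by
        rw [integral_add hf (integrableOn_const (by simp))]; simp [hvol]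

theorem stmt0_general (w : ℝ → ℝ)
    (hw_pos : ∀ x : ℝ, 0 < x → 0 < w x)
    (hwinv_loc : LocallyIntegrableOn (fun x => (w x)⁻¹) (Set.Ici 0)) :
    ∀ x : ℝ, 0 ≤ x → ∃ C : ℝ, 0 ≤ C ∧
      ∀ f f' : ℝ → ℝ, Measurable f → Measurable f' →
        (∀ a b : ℝ, 0 ≤ a → a ≤ b → f b - f a = ∫ s in a..b, f' s) →
        IntegrableOn (fun s => (f s) ^ 2 * w s) (Set.Ioi 0) →
        IntegrableOn (fun s => (f' s) ^ 2 * w s) (Set.Ioi 0) →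
        |f x| ≤ C * (Real.sqrt (∫ s in Set.Ioi (0:ℝ), (f s) ^ 2 * w s)
                   + Real.sqrt (∫ s in Set.Ioi (0:ℝ), (f' s) ^ 2 * w s)) := by
  intro x hx
  set I := Ioc x (x + 1)
  have hI_pos : I ⊆ Ioi 0 := fun s hs => hx.trans_lt hs.1
  have hw_pos_I : ∀ᵐ s ∂volume.restrict I, 0 < w s :=
    (ae_restrict_iff' measurableSet_Ioc).2 (.of_forall fun s hs => hw_pos s (hI_pos hs))
  have hwinv_I : IntegrableOn (fun s => (w s)⁻¹) I :=
    (hwinv_loc.integrableOn_compact_subset (fun s hs => hx.trans hs.1) isCompact_Icc).mono_set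
      Ioc_subset_Icc_self
  refine ⟨√(∫ s in I, (w s)⁻¹), Real.sqrt_nonneg _, ?_⟩
  intro f f' hf hf' hftc hfw hf'w
  have hbound : ∀ g : ℝ → ℝ, Measurable g → IntegrableOn (fun s => g s ^ 2 * w s) (Ioi 0) →
      IntegrableOn (fun s => |g s|) I ∧
        ∫ s in I, |g s| ≤ √(∫ s in Ioi 0, g s ^ 2 * w s) * √(∫ s in I, (w s)⁻¹) := by
    intro g hg hgw
    have hgw_I := hgw.mono_set hI_pos
    refine ⟨integrable_abs_of_integrable_sq_mul_weight hw_pos_I hwinv_I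
      hg.aestronglyMeasurable hgw_I, ?_⟩
    refine (integral_abs_le_sqrt_integral_sq_mul_weight hw_pos_I hwinv_I
      hg.aestronglyMeasurable hgw_I).trans ?_
    gcongr
    exact (ae_restrict_iff' measurableSet_Ioi).2
      (.of_forall fun s hs => mul_nonneg (sq_nonneg _) (hw_pos s hs).le)
  obtain ⟨hf_I, hf_bound⟩ := hbound f hf hfw
  obtain ⟨hf'_I, hf'_bound⟩ := hbound f' hf' hf'w
  calc |f x| ≤ (∫ s in I, |f s|) + ∫ s in I, |f' s| :=
        abs_le_setIntegral_abs_add_setIntegral_abs_deriv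
          (fun y hy => hftc x y hx hy.1.le) hf_I hf'_I
    _ ≤ _ := by linarith

/-- On the weighted Sobolev space `H¹_w(ℝ⁺)` with an admissible weight `w`,
every point evaluation `f ↦ f x` (for `x ≥ 0`) is a bounded linear functional:
`|f x| ≤ C_x (‖f‖_{L²_w} + ‖f'‖_{L²_w})`. Membership in `H¹_w` is expressed through an
absolutely continuous representative `f` with derivative `f'` (FTC form) and the weighted
square integrability of `f` and `f'`. -/
theorem stmt0 (w : ℝ → ℝ)
    (hw_pos : ∀ x : ℝ, 0 < x → 0 < w x)
    (hw_cont : ContinuousOn w (Set.Ioi 0))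
    (hw_loc : LocallyIntegrableOn w (Set.Ici 0))
    (hwinv_loc : LocallyIntegrableOn (fun x => (w x)⁻¹) (Set.Ici 0))
    (hw_adm : ∀ t : ℝ, 0 ≤ t → ∃ M : ℝ, ∀ s : ℝ, t ≤ s → w (s - t) / w s ≤ M) :
    ∀ x : ℝ, 0 ≤ x → ∃ C : ℝ, 0 ≤ C ∧
      ∀ f f' : ℝ → ℝ, Measurable f → Measurable f' →
        (∀ a b : ℝ, 0 ≤ a → a ≤ b → f b - f a = ∫ s in a..b, f' s) →
        IntegrableOn (fun s => (f s) ^ 2 * w s) (Set.Ioi 0) →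
        IntegrableOn (fun s => (f' s) ^ 2 * w s) (Set.Ioi 0) →
        |f x| ≤ C * (Real.sqrt (∫ s in Set.Ioi (0:ℝ), (f s) ^ 2 * w s)
                   + Real.sqrt (∫ s in Set.Ioi (0:ℝ), (f' s) ^ 2 * w s)) :=
  stmt0_general w hw_pos hwinv_loc
end

section
/- Let H ∈ (0,1/2), K(t) = t^{H−1/2}, w(x) = x^β e^{−x} with β ∈ (1−2H, 1). Then for every q < 2/(2−2H−β) (which exceeds 2 since β > 1−2H) and every T > 0, ∫₀^T ‖K(s+·)‖_{H¹_w}^q ds < ∞; in particular ∫₀^T (∫₀^∞ (s+x)^{2H−3} x^β e^{−x} dx)^{q/2} ds ≤ C T^{q(2H−ε+β−2)/2+1} for every small ε > 0 with the exponent nonnegative. -/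
/-!
Splitting `(s + x)^(a + b) ≤ s^a x^b` with `a, b ≤ 0` and letting the Gamma integral absorb
`x^b · x^β e^(-x)` gives `∫₀^∞ (s + x)^(2H-3) x^β e^(-x) dx ≤ Γ(ε) s^(2H-ε+β-2)` for
small `ε > 0`, while the undifferentiated term of the norm is at most `Γ(2H + β)`.
After raising to the power `q/2`, the resulting `s^(q(2H-ε+β-2)/2)` is integrable at `0` exactly
when `q(2 - 2H - β + ε) < 2`, and such an `ε > 0` exists because `q(2 - 2H - β) < 2`.
-/

open MeasureTheory Set Real

lemma rpow_add_le_mul_rpow_rpow {a b s x : ℝ} (ha : a ≤ 0) (hb : b ≤ 0) (hs : 0 < s)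
    (hx : 0 < x) : (s + x) ^ (a + b) ≤ s ^ a * x ^ b := by
  rw [rpow_add (by linarith)]
  exact mul_le_mul (rpow_le_rpow_of_nonpos hs (by linarith) ha)
    (rpow_le_rpow_of_nonpos hx (by linarith) hb) (by positivity) (by positivity)

lemma setIntegral_Ioi_add_rpow_mul_le_Gamma_mul_rpow {a b β s : ℝ} (ha : a ≤ 0) (hb : b ≤ 0)
    (hβb : 0 < β + b + 1) (hs : 0 < s) :
    ∫ x in Ioi (0:ℝ), (s + x) ^ (a + b) * (x ^ β * exp (-x)) ≤ Gamma (β + b + 1) * s ^ a := by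
  have hGamma := GammaIntegral_convergent hβb
  have hle : ∀ x ∈ Ioi (0:ℝ), (s + x) ^ (a + b) * (x ^ β * exp (-x))
      ≤ s ^ a * (exp (-x) * x ^ (β + b + 1 - 1)) := by
    intro x (hx : 0 < x)
    calc (s + x) ^ (a + b) * (x ^ β * exp (-x)) ≤ s ^ a * x ^ b * (x ^ β * exp (-x)) := by
          gcongr; exact rpow_add_le_mul_rpow_rpow ha hb hs hx
      _ = s ^ a * (exp (-x) * x ^ (β + b + 1 - 1)) := by
          rw [show β + b + 1 - 1 = b + β by ring, rpow_add hx]; ring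
  have hint : IntegrableOn (fun x => (s + x) ^ (a + b) * (x ^ β * exp (-x))) (Ioi 0) := by
    refine (hGamma.const_mul (s ^ a)).mono' (by fun_prop) ?_
    filter_upwards [ae_restrict_mem measurableSet_Ioi] with x (hx : 0 < x)
    rw [norm_of_nonneg (by positivity)]
    exact hle x hx
  calc ∫ x in Ioi (0:ℝ), (s + x) ^ (a + b) * (x ^ β * exp (-x))
      ≤ ∫ x in Ioi (0:ℝ), s ^ a * (exp (-x) * x ^ (β + b + 1 - 1)) :=
        setIntegral_mono_on hint (hGamma.const_mul _) measurableSet_Ioi hle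
    _ = Gamma (β + b + 1) * s ^ a := by
        rw [integral_const_mul, Gamma_eq_integral hβb, mul_comm]

section PowerBound

variable {f : ℝ → ℝ} {C a p T : ℝ}

lemma rpow_le_rpow_mul_rpow_of_le_mul_rpow {s : ℝ} (hC : 0 ≤ C) (hp : 0 ≤ p) (hs : 0 < s)
    (hf0 : 0 ≤ f s) (hf : f s ≤ C * s ^ a) : f s ^ p ≤ C ^ p * s ^ (p * a) := by
  rw [mul_comm p a, rpow_mul hs.le, ← mul_rpow hC (by positivity)]
  exact rpow_le_rpow hf0 hf hp

variable (hf : Measurable f) (hC : 0 ≤ C) (hp : 0 ≤ p) (hpa : -1 < p * a)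
  (hf0 : ∀ s ∈ Ioc 0 T, 0 ≤ f s) (hfC : ∀ s ∈ Ioc 0 T, f s ≤ C * s ^ a)
include hf hC hp hpa hf0 hfC

lemma integrableOn_Ioc_rpow_of_le_mul_rpow : IntegrableOn (fun s => f s ^ p) (Ioc 0 T) := by
  refine ((intervalIntegral.intervalIntegrable_rpow' hpa).1.const_mul (C ^ p)).mono'
    (hf.pow_const p).aestronglyMeasurable ?_
  filter_upwards [ae_restrict_mem measurableSet_Ioc] with s hs
  rw [norm_of_nonneg (rpow_nonneg (hf0 s hs) p)]
  exact rpow_le_rpow_mul_rpow_of_le_mul_rpow hC hp hs.1 (hf0 s hs) (hfC s hs)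

lemma setIntegral_Ioc_rpow_le_of_le_mul_rpow (hT : 0 < T) :
    ∫ s in Ioc 0 T, f s ^ p ≤ C ^ p / (p * a + 1) * T ^ (p * a + 1) := by
  calc ∫ s in Ioc 0 T, f s ^ p ≤ ∫ s in Ioc 0 T, C ^ p * s ^ (p * a) :=
        setIntegral_mono_on (integrableOn_Ioc_rpow_of_le_mul_rpow hf hC hp hpa hf0 hfC)
          ((intervalIntegral.intervalIntegrable_rpow' hpa).1.const_mul _) measurableSet_Ioc
          fun s hs => rpow_le_rpow_mul_rpow_of_le_mul_rpow hC hp hs.1 (hf0 s hs) (hfC s hs)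
    _ = C ^ p / (p * a + 1) * T ^ (p * a + 1) := by
        rw [integral_const_mul, ← intervalIntegral.integral_of_le hT.le,
          integral_rpow (Or.inl hpa), zero_rpow (by linarith)]
        ring

end PowerBound

/-- `‖K(s + ·)‖²_{H¹_w}` for the kernel `K(t) = t^(H - 1/2)` and the weight `w(x) = x^β e^(-x)`. -/
noncomputable def kernelWeightedH1NormSq (H β s : ℝ) : ℝ :=
  (∫ x in Ioi (0:ℝ), ((s + x) ^ (H - 1/2)) ^ 2 * (x ^ β * exp (-x)))
    + ∫ x in Ioi (0:ℝ), ((H - 1/2) * (s + x) ^ (H - 3/2)) ^ 2 * (x ^ β * exp (-x))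

section Kernel

variable {H β q ε T s : ℝ}

lemma setIntegral_kernel_sq_le (hH : H ≤ 1/2) (hβ : 1 - 2*H < β) (hs : 0 < s) :
    ∫ x in Ioi (0:ℝ), ((s + x) ^ (H - 1/2)) ^ 2 * (x ^ β * exp (-x)) ≤ Gamma (2*H + β) := by
  have h := setIntegral_Ioi_add_rpow_mul_le_Gamma_mul_rpow (β := β) le_rfl
    (show 2*H - 1 ≤ 0 by linarith) (by linarith) hs
  rw [zero_add, rpow_zero, mul_one, show β + (2*H - 1) + 1 = 2*H + β by ring] at h
  refine le_of_eq_of_le (setIntegral_congr_fun measurableSet_Ioi fun x (hx : 0 < x) => ?_) h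
  rw [← rpow_mul_natCast (by positivity)]
  ring_nf

lemma setIntegral_kernel_deriv_sq_eq (hs : 0 ≤ s) :
    ∫ x in Ioi (0:ℝ), ((H - 1/2) * (s + x) ^ (H - 3/2)) ^ 2 * (x ^ β * exp (-x))
      = (H - 1/2) ^ 2 * ∫ x in Ioi (0:ℝ), (s + x) ^ (2*H - 3) * (x ^ β * exp (-x)) := by
  rw [← integral_const_mul]
  refine setIntegral_congr_fun measurableSet_Ioi fun x (hx : 0 < x) => ?_
  rw [mul_pow, ← rpow_mul_natCast (by positivity)]
  ring_nf

lemma setIntegral_kernel_deriv_le (hε : 0 < ε) (hεβ : ε ≤ β + 1)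
    (ha : 2*H - ε + β - 2 ≤ 0) (hs : 0 < s) :
    ∫ x in Ioi (0:ℝ), (s + x) ^ (2*H - 3) * (x ^ β * exp (-x))
      ≤ Gamma ε * s ^ (2*H - ε + β - 2) := by
  have h := setIntegral_Ioi_add_rpow_mul_le_Gamma_mul_rpow (β := β) ha
    (show ε - β - 1 ≤ 0 by linarith) (by linarith) hs
  rwa [show 2*H - ε + β - 2 + (ε - β - 1) = 2*H - 3 by ring,
    show β + (ε - β - 1) + 1 = ε by ring] at h

lemma kernelWeightedH1NormSq_nonneg (H β s : ℝ) : 0 ≤ kernelWeightedH1NormSq H β s :=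
  add_nonneg (setIntegral_nonneg measurableSet_Ioi fun x (hx : 0 < x) => by positivity)
    (setIntegral_nonneg measurableSet_Ioi fun x (hx : 0 < x) => by positivity)

lemma measurable_kernelWeightedH1NormSq : Measurable (kernelWeightedH1NormSq H β) := by
  refine Measurable.add ?_ ?_
  · exact (StronglyMeasurable.integral_prod_right (f := fun s x : ℝ =>
      ((s + x) ^ (H - 1/2)) ^ 2 * (x ^ β * exp (-x))) (by fun_prop)).measurable
  · exact (StronglyMeasurable.integral_prod_right (f := fun s x : ℝ =>
      ((H - 1/2) * (s + x) ^ (H - 3/2)) ^ 2 * (x ^ β * exp (-x))) (by fun_prop)).measurable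

/-- On `(0, T]` the bounded term `∫ K(s+·)² w ≤ Γ(2H + β)` is dominated by a multiple of the
singular rate `s^(2H - ε + β - 2)` of the derivative term. -/
lemma kernelWeightedH1NormSq_le_mul_rpow (hH : H ≤ 1/2) (hβ : 1 - 2*H < β) (hε : 0 < ε)
    (hεβ : ε ≤ β + 1) (ha : 2*H - ε + β - 2 ≤ 0) (hs : s ∈ Ioc 0 T) :
    kernelWeightedH1NormSq H β s ≤ (Gamma (2*H + β) * T ^ (-(2*H - ε + β - 2))
      + (H - 1/2) ^ 2 * Gamma ε) * s ^ (2*H - ε + β - 2) := by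
  set a := 2*H - ε + β - 2
  obtain ⟨hs0, hsT⟩ := hs
  have hT : 0 < T := hs0.trans_le hsT
  have hone : 1 ≤ T ^ (-a) * s ^ a := by
    calc (1:ℝ) = T ^ (-a) * T ^ a := by rw [rpow_neg hT.le, inv_mul_cancel₀ (by positivity)]
      _ ≤ T ^ (-a) * s ^ a :=
        mul_le_mul_of_nonneg_left (rpow_le_rpow_of_nonpos hs0 hsT ha) (by positivity)
  have hΓ : 0 ≤ Gamma (2*H + β) := (Gamma_pos_of_pos (by linarith)).le
  rw [kernelWeightedH1NormSq, setIntegral_kernel_deriv_sq_eq hs0.le]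
  calc _ ≤ Gamma (2*H + β) * (T ^ (-a) * s ^ a) + (H - 1/2) ^ 2 * (Gamma ε * s ^ a) :=
        add_le_add ((setIntegral_kernel_sq_le hH hβ hs0).trans (le_mul_of_one_le_right hΓ hone))
          (mul_le_mul_of_nonneg_left (setIntegral_kernel_deriv_le hε hεβ ha hs0) (sq_nonneg _))
    _ = _ := by ring

lemma integrableOn_sqrt_kernelWeightedH1NormSq_rpow (hH : H ≤ 1/2) (hβ : 1 - 2*H < β)
    (hq : 0 ≤ q) (hT : 0 < T) (hε : 0 < ε) (hεβ : ε ≤ β + 1) (ha : 2*H - ε + β - 2 ≤ 0)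
    (hqε : q * (2 - 2*H - β + ε) < 2) :
    IntegrableOn (fun s => sqrt (kernelWeightedH1NormSq H β s) ^ q) (Ioc 0 T) := by
  have hsqrt : (fun s => sqrt (kernelWeightedH1NormSq H β s) ^ q)
      = fun s => kernelWeightedH1NormSq H β s ^ (q / 2) := by
    funext s
    rw [sqrt_eq_rpow, ← rpow_mul (kernelWeightedH1NormSq_nonneg H β s)]
    ring_nf
  rw [hsqrt]
  exact integrableOn_Ioc_rpow_of_le_mul_rpow measurable_kernelWeightedH1NormSq
    (by have := Gamma_pos_of_pos hε; have := Gamma_pos_of_pos (show 0 < 2*H + β by linarith)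
        positivity) (by linarith) (by linarith)
    (fun s _ => kernelWeightedH1NormSq_nonneg H β s)
    (fun s hs => kernelWeightedH1NormSq_le_mul_rpow hH hβ hε hεβ ha hs)

lemma setIntegral_kernel_deriv_rpow_le (hq : 0 ≤ q) (hε : 0 < ε) (hεβ : ε ≤ β + 1)
    (ha : 2*H - ε + β - 2 ≤ 0) (hqε : q * (2 - 2*H - β + ε) < 2) (hT : 0 < T) :
    ∫ s in Ioc 0 T, (∫ x in Ioi (0:ℝ), (s + x) ^ (2*H - 3) * (x ^ β * exp (-x))) ^ (q/2)
      ≤ Gamma ε ^ (q/2) / (q * (2*H - ε + β - 2) / 2 + 1)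
        * T ^ (q * (2*H - ε + β - 2) / 2 + 1) := by
  have h := setIntegral_Ioc_rpow_le_of_le_mul_rpow (p := q / 2)
    (StronglyMeasurable.integral_prod_right (f := fun s x : ℝ =>
      (s + x) ^ (2*H - 3) * (x ^ β * exp (-x))) (by fun_prop)).measurable
    (Gamma_pos_of_pos hε).le (by linarith) (by linarith)
    (fun s hs => setIntegral_nonneg measurableSet_Ioi fun x (hx : 0 < x) => by
      have := hs.1; positivity)
    (fun s hs => setIntegral_kernel_deriv_le hε hεβ ha hs.1) hT
  rwa [show q / 2 * (2*H - ε + β - 2) = q * (2*H - ε + β - 2) / 2 by ring] at h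

end Kernel

/-- for the power-law kernel `K(t) = t^{H−1/2}`, `H ∈ (0,1/2)`, and weight
`w(x) = x^β e^{−x}`, `β ∈ (1−2H,1)`: for every `q < 2/(2−2H−β)` (which exceeds `2`) and
every `T > 0`, `∫₀^T ‖K(s+·)‖_{H¹_w}^q ds < ∞`; in particular, for every small `ε > 0`
(with `q(2−2H−β+ε) < 2`) there is a constant `C > 0` such that
`∫₀^T (∫₀^∞ (s+x)^{2H−3} x^β e^{−x} dx)^{q/2} ds ≤ C T^{q(2H−ε+β−2)/2+1}` with a
nonnegative exponent. -/
theorem stmt7 (H β q T : ℝ)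
    (hH : H ∈ Set.Ioo (0:ℝ) (1/2)) (hβ : β ∈ Set.Ioo (1 - 2*H) 1)
    (hq2 : 2 < q) (hq : q < 2 / (2 - 2*H - β)) (hT : 0 < T) :
    IntegrableOn (fun s =>
        (Real.sqrt ((∫ x in Set.Ioi (0:ℝ), ((s + x) ^ (H - 1/2)) ^ 2 * (x ^ β * Real.exp (-x)))
          + ∫ x in Set.Ioi (0:ℝ),
              ((H - 1/2) * (s + x) ^ (H - 3/2)) ^ 2 * (x ^ β * Real.exp (-x)))) ^ q)
      (Set.Ioc 0 T) ∧
    (∀ ε : ℝ, 0 < ε → q * (2 - 2*H - β + ε) < 2 →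
      ∃ C : ℝ, 0 < C ∧ 0 ≤ q * (2*H - ε + β - 2) / 2 + 1 ∧
        ∀ T' : ℝ, 0 < T' →
          (∫ s in Set.Ioc (0:ℝ) T',
              (∫ x in Set.Ioi (0:ℝ), ((s + x) ^ (2*H - 3)) * (x ^ β * Real.exp (-x))) ^ (q/2))
            ≤ C * T' ^ (q * (2*H - ε + β - 2) / 2 + 1)) := by
  have hd : 0 < 2 - 2*H - β := by
    by_contra! h
    linarith [div_nonpos_of_nonneg_of_nonpos zero_le_two h]
  have hqd : q * (2 - 2*H - β) < 2 := by rw [lt_div_iff₀ hd] at hq; linarith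
  have admissible : ∀ ε, 0 < ε → q * (2 - 2*H - β + ε) < 2 →
      ε ≤ β + 1 ∧ 2*H - ε + β - 2 ≤ 0 := by
    intro ε hε hqε
    have : 2 - 2*H - β + ε < 1 := by nlinarith
    constructor <;> linarith [hH.2, hβ.1]
  refine ⟨?_, fun ε hε hqε => ?_⟩
  · obtain ⟨ε, hε, hqε⟩ : ∃ ε, 0 < ε ∧ q * (2 - 2*H - β + ε) < 2 := by
      refine ⟨(2 - q * (2 - 2*H - β)) / (2 * q), div_pos (by linarith) (by linarith), ?_⟩
      have : q * ((2 - q * (2 - 2*H - β)) / (2 * q)) = (2 - q * (2 - 2*H - β)) / 2 := by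
        field_simp
      linarith
    obtain ⟨hεβ, ha⟩ := admissible ε hε hqε
    exact integrableOn_sqrt_kernelWeightedH1NormSq_rpow hH.2.le hβ.1 (by linarith) hT hε hεβ ha hqε
  · obtain ⟨hεβ, ha⟩ := admissible ε hε hqε
    have hexp : 0 < q * (2*H - ε + β - 2) / 2 + 1 := by linarith
    refine ⟨Gamma ε ^ (q/2) / (q * (2*H - ε + β - 2) / 2 + 1), ?_, hexp.le, fun T' hT' => ?_⟩
    · have := Gamma_pos_of_pos hε
      positivity
    · exact setIntegral_kernel_deriv_rpow_le (by linarith) hε hεβ ha hqε hT'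
end

section
/- Let H ∈ (0,1/2), K(t) = t^{H−1/2}, w(x) = x^β e^{−x} with β ∈ (1−2H, 1). Then for every t, h > 0, ∫₀^t ∫₀^∞ K''(s+h+x)² w(x) dx ds ≤ C h^{β+2H−3} for a constant C independent of t, h, where the exponent satisfies β+2H−3 > −2. Consequently h ↦ (∫₀^t |∂_x² S(s+h)K|²_{L²_w} ds)^{1/2} is integrable near h = 0. -/
/-!
Squaring `K''(u) = k u^p` gives the power `u^c` with `c = 2p = 2H - 5`. The substitution
`x = u y` shows `∫₀^∞ (u+x)^c x^β dx = u^{c+β+1} ∫₀^∞ (1+y)^c y^β dy`, finite because `β > -1`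
and `β + c < -1`; dropping `e^{-x} ≤ 1` bounds the inner integral by a constant times
`(s+h)^{c+β+1}`. As `c + β + 1 < -1`, integrating in `s` over `(0, t] ⊆ (0, ∞)` gives a bound
`C h^{c+β+2}` uniform in `t`. Its square root is `√C h^{(β+2H-3)/2}`, integrable at `0` since
`β + 2H - 3 > -2`.
-/

open MeasureTheory Set

section PowerIntegrals

variable {c β : ℝ}

theorem integrableOn_Ioi_one_add_rpow_mul_rpow (hc : c ≤ 0) (hβ : -1 < β) (hcβ : β + c < -1) :
    IntegrableOn (fun y : ℝ => (1 + y) ^ c * y ^ β) (Ioi 0) := by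
  have hmeas : AEStronglyMeasurable (fun y : ℝ => (1 + y) ^ c * y ^ β) volume :=
    (((measurable_const.add measurable_id).pow_const c).mul
      (measurable_id.pow_const β)).aestronglyMeasurable
  have near_zero : IntegrableOn (fun y : ℝ => (1 + y) ^ c * y ^ β) (Ioc 0 1) := by
    have hint : IntegrableOn (fun y : ℝ => y ^ β) (Ioc 0 1) := by
      rw [← intervalIntegrable_iff_integrableOn_Ioc_of_le zero_le_one]
      exact intervalIntegral.intervalIntegrable_rpow' hβ
    refine hint.mono' hmeas.restrict ?_
    filter_upwards [ae_restrict_mem measurableSet_Ioc] with y hy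
    have hy0 : 0 < y := hy.1
    rw [Real.norm_of_nonneg (by positivity)]
    exact mul_le_of_le_one_left (by positivity)
      (Real.rpow_le_one_of_one_le_of_nonpos (by linarith) hc)
  have near_infty : IntegrableOn (fun y : ℝ => (1 + y) ^ c * y ^ β) (Ioi 1) := by
    refine (integrableOn_Ioi_rpow_of_lt hcβ zero_lt_one).mono' hmeas.restrict ?_
    filter_upwards [ae_restrict_mem measurableSet_Ioi] with y (hy : 1 < y)
    have hy0 : 0 < y := zero_lt_one.trans hy
    rw [Real.norm_of_nonneg (by positivity), Real.rpow_add hy0, mul_comm (y ^ β)]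
    exact mul_le_mul_of_nonneg_right
      (Real.rpow_le_rpow_of_nonpos hy0 (by linarith) hc) (by positivity)
  simpa only [Ioc_union_Ioi_eq_Ioi zero_le_one] using near_zero.union near_infty

theorem add_mul_rpow_mul_mul_rpow {u y : ℝ} (hu : 0 < u) (hy : 0 < y) :
    (u + u * y) ^ c * (u * y) ^ β = u ^ c * u ^ β * ((1 + y) ^ c * y ^ β) := by
  rw [show u + u * y = u * (1 + y) by ring, Real.mul_rpow hu.le (by linarith),
    Real.mul_rpow hu.le hy.le]
  ring

theorem integrableOn_Ioi_add_rpow_mul_rpow (hc : c ≤ 0) (hβ : -1 < β) (hcβ : β + c < -1)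
    {u : ℝ} (hu : 0 < u) : IntegrableOn (fun x : ℝ => (u + x) ^ c * x ^ β) (Ioi 0) := by
  rw [← mul_zero u, ← integrableOn_Ioi_comp_mul_left_iff _ 0 hu]
  exact IntegrableOn.congr_fun ((integrableOn_Ioi_one_add_rpow_mul_rpow hc hβ hcβ).const_mul
    (u ^ c * u ^ β)) (fun y (hy : 0 < y) => (add_mul_rpow_mul_mul_rpow hu hy).symm)
    measurableSet_Ioi

theorem integral_Ioi_add_rpow_mul_rpow {u : ℝ} (hu : 0 < u) :
    ∫ x in Ioi 0, (u + x) ^ c * x ^ β =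
      u ^ (c + β + 1) * ∫ y in Ioi 0, (1 + y) ^ c * y ^ β := by
  have hscale := integral_comp_mul_left_Ioi (fun x : ℝ => (u + x) ^ c * x ^ β) 0 hu
  rw [mul_zero, setIntegral_congr_fun measurableSet_Ioi
    (fun y (hy : 0 < y) => add_mul_rpow_mul_mul_rpow hu hy), integral_const_mul,
    smul_eq_mul] at hscale
  rw [Real.rpow_add hu, Real.rpow_add hu, Real.rpow_one, mul_comm _ u, mul_assoc u, hscale,
    mul_inv_cancel_left₀ hu.ne']

theorem integral_Ioi_add_rpow_mul_rpow_mul_exp_le (hc : c ≤ 0) (hβ : -1 < β)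
    (hcβ : β + c < -1) {u : ℝ} (hu : 0 < u) :
    ∫ x in Ioi 0, (u + x) ^ c * (x ^ β * Real.exp (-x)) ≤
      u ^ (c + β + 1) * ∫ y in Ioi 0, (1 + y) ^ c * y ^ β := by
  rw [← integral_Ioi_add_rpow_mul_rpow hu]
  refine integral_mono_of_nonneg ?_ (integrableOn_Ioi_add_rpow_mul_rpow hc hβ hcβ hu) ?_
  · filter_upwards [ae_restrict_mem measurableSet_Ioi] with x (hx : 0 < x)
    positivity
  · filter_upwards [ae_restrict_mem measurableSet_Ioi] with x (hx : 0 < x)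
    refine mul_le_mul_of_nonneg_left ?_ (by positivity)
    exact mul_le_of_le_one_right (by positivity) (Real.exp_le_one_iff.mpr (by linarith))

theorem setIntegral_Ioc_add_rpow_le {a : ℝ} (ha : a < -1) {t h : ℝ} (ht : 0 ≤ t) (hh : 0 < h) :
    ∫ s in Ioc 0 t, (s + h) ^ a ≤ -h ^ (a + 1) / (a + 1) := by
  have hshift : ∫ s in Ioc 0 t, (s + h) ^ a = ∫ u in Ioc h (t + h), u ^ a := by
    rw [← intervalIntegral.integral_of_le ht,
      ← intervalIntegral.integral_of_le (by linarith : h ≤ t + h)]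
    simpa using intervalIntegral.integral_comp_add_right (a := 0) (b := t) (fun u => u ^ a) h
  rw [hshift, ← integral_Ioi_rpow_of_lt ha hh]
  refine setIntegral_mono_set (integrableOn_Ioi_rpow_of_lt ha hh) ?_
    Ioc_subset_Ioi_self.eventuallyLE
  filter_upwards [ae_restrict_mem measurableSet_Ioi] with u (hu : h < u)
  exact Real.rpow_nonneg (hh.trans hu).le _

end PowerIntegrals

theorem setIntegral_Ioc_setIntegral_Ioi_add_rpow_le {c β : ℝ} (hβ : -1 < β)
    (hcβ : β + c < -2) {t h : ℝ} (ht : 0 ≤ t) (hh : 0 < h) :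
    ∫ s in Ioc 0 t, ∫ x in Ioi 0, (s + h + x) ^ c * (x ^ β * Real.exp (-x)) ≤
      (∫ y in Ioi 0, (1 + y) ^ c * y ^ β) / -(c + β + 2) * h ^ (c + β + 2) := by
  set B := ∫ y in Ioi (0 : ℝ), (1 + y) ^ c * y ^ β
  have hc : c ≤ 0 := by linarith
  have hB : 0 ≤ B := setIntegral_nonneg measurableSet_Ioi fun y (hy : 0 < y) => by positivity
  calc ∫ s in Ioc 0 t, ∫ x in Ioi 0, (s + h + x) ^ c * (x ^ β * Real.exp (-x))
      ≤ ∫ s in Ioc 0 t, B * (s + h) ^ (c + β + 1) := by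
        refine integral_mono_of_nonneg ?_ ?_ ?_
        · filter_upwards [ae_restrict_mem measurableSet_Ioc] with s hs
          have hs0 : 0 < s := hs.1
          exact setIntegral_nonneg measurableSet_Ioi fun x (hx : 0 < x) => by positivity
        · refine (ContinuousOn.integrableOn_Icc ?_).mono_set Ioc_subset_Icc_self
          exact continuousOn_const.mul <| (continuous_add_const h).continuousOn.rpow_const
            fun s hs => Or.inl (by linarith [hs.1])
        · filter_upwards [ae_restrict_mem measurableSet_Ioc] with s hs
          rw [mul_comm B]
          exact integral_Ioi_add_rpow_mul_rpow_mul_exp_le hc hβ (by linarith) (by linarith [hs.1])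
    _ = B * ∫ s in Ioc 0 t, (s + h) ^ (c + β + 1) := integral_const_mul _ _
    _ ≤ B * (-h ^ (c + β + 1 + 1) / (c + β + 1 + 1)) :=
        mul_le_mul_of_nonneg_left (setIntegral_Ioc_add_rpow_le (by linarith) ht hh) hB
    _ = B / -(c + β + 2) * h ^ (c + β + 2) := by
        rw [show c + β + 1 + 1 = c + β + 2 by ring, div_neg, neg_div]
        ring

theorem exists_setIntegral_Ioc_setIntegral_Ioi_sq_mul_rpow_le (k : ℝ) {p β : ℝ}
    (hβ : -1 < β) (hpβ : β + 2 * p < -2) :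
    ∃ C, 0 ≤ C ∧ ∀ t, 0 ≤ t → ∀ h, 0 < h →
      ∫ s in Ioc 0 t, ∫ x in Ioi 0, (k * (s + h + x) ^ p) ^ 2 * (x ^ β * Real.exp (-x)) ≤
        C * h ^ (2 * p + β + 2) := by
  set B := ∫ y in Ioi (0 : ℝ), (1 + y) ^ (2 * p) * y ^ β
  have hB : 0 ≤ B := setIntegral_nonneg measurableSet_Ioi fun y (hy : 0 < y) => by positivity
  have hexp : 0 < -(2 * p + β + 2) := by linarith
  refine ⟨k ^ 2 * (B / -(2 * p + β + 2)), by positivity, fun t ht h hh => ?_⟩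
  have hsq : ∀ s ∈ Ioc 0 t, ∀ x ∈ Ioi (0 : ℝ),
      (k * (s + h + x) ^ p) ^ 2 * (x ^ β * Real.exp (-x)) =
        k ^ 2 * ((s + h + x) ^ (2 * p) * (x ^ β * Real.exp (-x))) := fun s hs x hx => by
    rw [mul_pow, ← Real.rpow_two ((s + h + x) ^ p), ← Real.rpow_mul (by linarith [hs.1, hx.out]),
      mul_comm p 2, mul_assoc]
  rw [setIntegral_congr_fun measurableSet_Ioc fun s hs =>
    (setIntegral_congr_fun measurableSet_Ioi (hsq s hs)).trans (integral_const_mul _ _),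
    integral_const_mul, mul_assoc]
  exact mul_le_mul_of_nonneg_left
    (setIntegral_Ioc_setIntegral_Ioi_add_rpow_le hβ (by linarith) ht hh) (sq_nonneg k)

theorem stronglyMeasurable_setIntegral_setIntegral {f : ℝ → ℝ → ℝ → ℝ}
    (hf : Measurable fun q : (ℝ × ℝ) × ℝ => f q.1.1 q.1.2 q.2) (S T : Set ℝ) :
    StronglyMeasurable fun h => ∫ s in S, ∫ x in T, f h s x :=
  hf.stronglyMeasurable.integral_prod_right'.integral_prod_right'

theorem integrableOn_Ioc_sqrt_of_le_rpow {G : ℝ → ℝ} (hG : AEStronglyMeasurable G volume)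
    {C q : ℝ} (hC : 0 ≤ C) (hq : -2 < q) (hbound : ∀ h, 0 < h → G h ≤ C * h ^ q) :
    IntegrableOn (fun h => Real.sqrt (G h)) (Ioc 0 1) := by
  have hint : IntegrableOn (fun h : ℝ => Real.sqrt C * h ^ (q / 2)) (Ioc 0 1) := by
    refine Integrable.const_mul (?_ : IntegrableOn (fun h : ℝ => h ^ (q / 2)) (Ioc 0 1)) _
    rw [← intervalIntegrable_iff_integrableOn_Ioc_of_le zero_le_one]
    exact intervalIntegral.intervalIntegrable_rpow' (by linarith)
  refine hint.mono' (Real.continuous_sqrt.comp_aestronglyMeasurable hG).restrict ?_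
  filter_upwards [ae_restrict_mem measurableSet_Ioc] with h hh
  calc ‖Real.sqrt (G h)‖ = Real.sqrt (G h) := Real.norm_of_nonneg (Real.sqrt_nonneg _)
    _ ≤ Real.sqrt (C * h ^ q) := Real.sqrt_le_sqrt (hbound h hh.1)
    _ = Real.sqrt C * h ^ (q / 2) := by
        rw [Real.sqrt_mul hC, Real.sqrt_eq_rpow (h ^ q), ← Real.rpow_mul hh.1.le]
        ring_nf

/-- for the power-law kernel `K(t) = t^{H−1/2}`, `H ∈ (0,1/2)`, and weight
`w(x) = x^β e^{−x}`, `β ∈ (1−2H,1)`: the exponent satisfies `β+2H−3 > −2`, and there is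
`C > 0` (independent of `t, h`) with
`∫₀^t ∫₀^∞ K''(s+h+x)² w(x) dx ds ≤ C h^{β+2H−3}` for all `t, h > 0`, where
`K''(u) = (H−1/2)(H−3/2) u^{H−5/2}`. Consequently, for every `t > 0`, the map
`h ↦ (∫₀^t ‖∂_x² S(s+h)K‖²_{L²_w} ds)^{1/2}` is integrable near `h = 0`. -/
theorem stmt8 (H β : ℝ) (hH : H ∈ Set.Ioo (0:ℝ) (1/2)) (hβ : β ∈ Set.Ioo (1 - 2*H) 1) :
    (-2 < β + 2*H - 3) ∧
    (∃ C : ℝ, 0 < C ∧ ∀ t : ℝ, 0 < t → ∀ h : ℝ, 0 < h →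
      (∫ s in Set.Ioc (0:ℝ) t, ∫ x in Set.Ioi (0:ℝ),
          ((H - 1/2) * (H - 3/2) * (s + h + x) ^ (H - 5/2)) ^ 2 * (x ^ β * Real.exp (-x)))
        ≤ C * h ^ (β + 2*H - 3)) ∧
    (∀ t : ℝ, 0 < t →
      IntegrableOn (fun h => Real.sqrt
          (∫ s in Set.Ioc (0:ℝ) t, ∫ x in Set.Ioi (0:ℝ),
            ((H - 1/2) * (H - 3/2) * (s + h + x) ^ (H - 5/2)) ^ 2 * (x ^ β * Real.exp (-x))))
        (Set.Ioc 0 1)) := by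
  obtain ⟨hH0, hH2⟩ := hH
  obtain ⟨hβ1, hβ2⟩ := hβ
  obtain ⟨M, hM, hle⟩ := exists_setIntegral_Ioc_setIntegral_Ioi_sq_mul_rpow_le
    ((H - 1/2) * (H - 3/2)) (by linarith : -1 < β) (by linarith : β + 2 * (H - 5/2) < -2)
  have hbound : ∀ t : ℝ, 0 < t → ∀ h : ℝ, 0 < h →
      (∫ s in Set.Ioc (0:ℝ) t, ∫ x in Set.Ioi (0:ℝ),
          ((H - 1/2) * (H - 3/2) * (s + h + x) ^ (H - 5/2)) ^ 2 * (x ^ β * Real.exp (-x)))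
        ≤ (M + 1) * h ^ (β + 2*H - 3) := fun t ht h hh => by
    rw [show β + 2*H - 3 = 2 * (H - 5/2) + β + 2 by ring]
    exact (hle t ht.le h hh).trans
      (mul_le_mul_of_nonneg_right (by linarith) (Real.rpow_nonneg hh.le _))
  refine ⟨by linarith, ⟨M + 1, by linarith, hbound⟩, fun t ht => ?_⟩
  refine integrableOn_Ioc_sqrt_of_le_rpow ?_ (by linarith) (by linarith) (hbound t ht)
  refine (stronglyMeasurable_setIntegral_setIntegral ?_ _ _).aestronglyMeasurable
  fun_prop
end

section
/- Let H ∈ (0,1/2), K(t) = t^{H−1/2}, w(x) = x^β e^{−x} with β ∈ (1−2H, 1), p > 1, and h > 0. Then for all s ≥ 0 and x > 0, |K'(s+h+x) − K'(s+x)| ≤ C h^{1−1/p} (s+x)^{H−5/2+1/p}, and consequently ∫₀^t ‖K'(·+h+s) − K'(·+s)‖²_{L²_w} ds ≤ C h^{2−2/p} Γ(β+2H−3+2/p), provided β+2H−3+2/p > 0. -/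
open MeasureTheory Set Real

/-!
Write `u = s + x` and `γ = H - 3/2 < 0`. The difference `u ^ γ - (u + h) ^ γ` is bounded both by
`u ^ γ` and, by the mean value theorem, by `-γ u ^ (γ - 1) h`; the geometric mean of these two
bounds with weights `1/p` and `1 - 1/p` is the pointwise estimate. Squared, it gives
`C² h ^ (2 - 2/p) (s + x) ^ δ` with `δ = 2H - 5 + 2/p < -1`. Enlarging `(0, t]` to `(0, ∞)` and
integrating in `s` first (Fubini), `∫₀^∞ (s + x) ^ δ ds = x ^ (δ + 1) / (-δ - 1)`, which leaves the
Gamma integral `∫₀^∞ x ^ (β + δ + 1) e^{-x} dx = Γ(β + δ + 2)` with `β + δ + 2 = β + 2H - 3 + 2/p`.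
-/

lemma rpow_sub_rpow_add_le_mul {γ u h : ℝ} (hγ : γ < 0) (hu : 0 < u) (hh : 0 < h) :
    u ^ γ - (u + h) ^ γ ≤ -γ * u ^ (γ - 1) * h := by
  have hpos : ∀ t ∈ Icc u (u + h), t ≠ 0 := fun t ht => (hu.trans_le ht.1).ne'
  obtain ⟨c, hc, hslope⟩ := exists_hasDerivAt_eq_slope (fun t : ℝ => t ^ γ)
    (fun t => γ * t ^ (γ - 1)) (lt_add_of_pos_right u hh)
    (fun t ht => (continuousAt_rpow_const t γ (.inl (hpos t ht))).continuousWithinAt)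
    (fun t ht => hasDerivAt_rpow_const (.inl (hpos t (Ioo_subset_Icc_self ht))))
  have hmono : c ^ (γ - 1) ≤ u ^ (γ - 1) := rpow_le_rpow_of_nonpos hu hc.1.le (by linarith)
  rw [add_sub_cancel_left, eq_div_iff hh.ne'] at hslope
  nlinarith [mul_le_mul_of_nonneg_left hmono (mul_nonneg (neg_nonneg.2 hγ.le) hh.le)]

lemma min_le_rpow_mul_rpow {a b θ : ℝ} (ha : 0 ≤ a) (hb : 0 ≤ b) (hθ₀ : 0 ≤ θ) (hθ₁ : θ ≤ 1) :
    min a b ≤ a ^ θ * b ^ (1 - θ) := by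
  have hsplit : ∀ c : ℝ, 0 ≤ c → c = c ^ θ * c ^ (1 - θ) := fun c hc => by
    rw [← rpow_add_of_nonneg hc hθ₀ (by linarith), add_sub_cancel, rpow_one]
  rcases le_total a b with hab | hab
  · rw [min_eq_left hab]
    nth_rewrite 1 [hsplit a ha]
    gcongr
  · rw [min_eq_right hab]
    nth_rewrite 1 [hsplit b hb]
    gcongr

lemma rpow_sub_rpow_add_le {γ θ u h : ℝ} (hγ : γ < 0) (hθ₀ : 0 ≤ θ) (hθ₁ : θ ≤ 1)
    (hu : 0 < u) (hh : 0 < h) :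
    u ^ γ - (u + h) ^ γ ≤ (-γ) ^ (1 - θ) * h ^ (1 - θ) * u ^ (γ - 1 + θ) := by
  have hγ' : 0 ≤ -γ := neg_nonneg.2 hγ.le
  have htriv : u ^ γ - (u + h) ^ γ ≤ u ^ γ := by
    linarith [rpow_nonneg (by linarith : 0 ≤ u + h) γ]
  have hmvt := rpow_sub_rpow_add_le_mul hγ hu hh
  calc u ^ γ - (u + h) ^ γ
      ≤ (u ^ γ) ^ θ * (-γ * u ^ (γ - 1) * h) ^ (1 - θ) :=
        (le_min htriv hmvt).trans (min_le_rpow_mul_rpow (by positivity) (by positivity) hθ₀ hθ₁)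
    _ = (-γ) ^ (1 - θ) * h ^ (1 - θ) * u ^ (γ - 1 + θ) := by
        rw [mul_rpow (by positivity) hh.le, mul_rpow hγ' (by positivity),
          ← rpow_mul hu.le, ← rpow_mul hu.le,
          show γ - 1 + θ = γ * θ + (γ - 1) * (1 - θ) by ring, rpow_add hu]
        ring

lemma abs_mul_rpow_add_sub_le (c : ℝ) {γ θ u h : ℝ} (hγ : γ < 0) (hθ₀ : 0 ≤ θ) (hθ₁ : θ ≤ 1)
    (hu : 0 < u) (hh : 0 < h) :
    |c * (u + h) ^ γ - c * u ^ γ| ≤ |c| * (-γ) ^ (1 - θ) * h ^ (1 - θ) * u ^ (γ - 1 + θ) := by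
  have hanti : (u + h) ^ γ ≤ u ^ γ := rpow_le_rpow_of_nonpos hu (by linarith) hγ.le
  rw [← mul_sub, abs_mul, abs_of_nonpos (sub_nonpos.2 hanti), neg_sub, mul_assoc, mul_assoc,
    ← mul_assoc ((-γ) ^ (1 - θ))]
  exact mul_le_mul_of_nonneg_left (rpow_sub_rpow_add_le hγ hθ₀ hθ₁ hu hh) (abs_nonneg c)

lemma integrableOn_Ioi_rpow_add {δ x : ℝ} (hδ : δ < -1) (hx : 0 < x) :
    IntegrableOn (fun s => (s + x) ^ δ) (Ioi 0) := by
  have := (measurePreserving_add_right volume x).integrableOn_comp_preimage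
    (measurableEmbedding_addRight x) (f := fun s => s ^ δ) (s := Ioi x)
  rw [preimage_add_const_Ioi, sub_self] at this
  exact this.2 (integrableOn_Ioi_rpow_of_lt hδ hx)

lemma integral_Ioi_rpow_add {δ x : ℝ} (hδ : δ < -1) (hx : 0 < x) :
    ∫ s in Ioi 0, (s + x) ^ δ = x ^ (δ + 1) / (-δ - 1) := by
  have := (measurePreserving_add_right volume x).setIntegral_preimage_emb
    (measurableEmbedding_addRight x) (fun s => s ^ δ) (Ioi x)
  rw [preimage_add_const_Ioi, sub_self] at this
  rw [this, integral_Ioi_rpow_of_lt hδ hx, neg_div, ← div_neg, neg_add']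

lemma integral_Ioi_rpow_add_mul_rpow_mul_exp {β δ x : ℝ} (hδ : δ < -1) (hx : 0 < x) :
    ∫ s in Ioi 0, (s + x) ^ δ * (x ^ β * exp (-x))
      = exp (-x) * x ^ (β + δ + 2 - 1) / (-δ - 1) := by
  rw [integral_mul_const, integral_Ioi_rpow_add hδ hx,
    show β + δ + 2 - 1 = (δ + 1) + β by ring, rpow_add hx (δ + 1) β]
  ring

lemma integrable_rpow_add_mul_rpow_mul_exp {β δ : ℝ} (hδ : δ < -1) (hβδ : 0 < β + δ + 2) :
    Integrable (fun z : ℝ × ℝ => (z.1 + z.2) ^ δ * (z.2 ^ β * exp (-z.2)))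
      ((volume.restrict (Ioi 0)).prod (volume.restrict (Ioi 0))) := by
  refine (integrable_prod_iff' (by fun_prop)).2 ⟨?_, ?_⟩
  · filter_upwards [ae_restrict_mem measurableSet_Ioi] with x hx
    exact (integrableOn_Ioi_rpow_add hδ hx).mul_const _
  · refine ((GammaIntegral_convergent hβδ).div_const (-δ - 1)).congr ?_
    filter_upwards [ae_restrict_mem measurableSet_Ioi] with x (hx : 0 < x)
    rw [← integral_Ioi_rpow_add_mul_rpow_mul_exp hδ hx]
    refine setIntegral_congr_fun measurableSet_Ioi fun s (hs : 0 < s) => ?_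
    exact (Real.norm_of_nonneg (by positivity)).symm

lemma integral_Ioi_integral_Ioi_rpow_add_mul_rpow_mul_exp {β δ : ℝ} (hδ : δ < -1)
    (hβδ : 0 < β + δ + 2) :
    ∫ s in Ioi 0, ∫ x in Ioi 0, (s + x) ^ δ * (x ^ β * exp (-x))
      = Gamma (β + δ + 2) / (-δ - 1) := by
  rw [integral_integral_swap (integrable_rpow_add_mul_rpow_mul_exp hδ hβδ), Gamma_eq_integral hβδ,
    ← integral_div]
  exact setIntegral_congr_fun measurableSet_Ioi fun x hx =>
    integral_Ioi_rpow_add_mul_rpow_mul_exp hδ hx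

lemma integral_Ioc_integral_Ioi_sq_mul_le {f : ℝ → ℝ → ℝ} {M β δ : ℝ} (t : ℝ) (hM : 0 ≤ M)
    (hδ : δ < -1) (hβδ : 0 < β + δ + 2)
    (hf : ∀ s, 0 < s → ∀ x, 0 < x → f s x ^ 2 ≤ M * (s + x) ^ δ) :
    ∫ s in Ioc 0 t, ∫ x in Ioi 0, f s x ^ 2 * (x ^ β * exp (-x))
      ≤ M * (Gamma (β + δ + 2) / (-δ - 1)) := by
  have hint := integrable_rpow_add_mul_rpow_mul_exp hδ hβδ
  have hbound : ∀ᵐ s ∂volume.restrict (Ioc 0 t),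
      ∫ x in Ioi 0, f s x ^ 2 * (x ^ β * exp (-x))
        ≤ M * ∫ x in Ioi 0, (s + x) ^ δ * (x ^ β * exp (-x)) := by
    filter_upwards [ae_restrict_mem measurableSet_Ioc,
      ae_restrict_of_ae_restrict_of_subset Ioc_subset_Ioi_self hint.prod_right_ae]
      with s (hs : s ∈ Ioc 0 t) hs_int
    rw [← integral_const_mul]
    refine integral_mono_of_nonneg ?_ (hs_int.const_mul M) ?_ <;>
      filter_upwards [ae_restrict_mem measurableSet_Ioi] with x (hx : 0 < x)
    · positivity
    · rw [← mul_assoc M]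
      exact mul_le_mul_of_nonneg_right (hf s hs.1 x hx) (by positivity)
  have hnonneg : 0 ≤ᵐ[volume.restrict (Ioi 0)]
      fun s => M * ∫ x in Ioi 0, (s + x) ^ δ * (x ^ β * exp (-x)) := by
    filter_upwards [ae_restrict_mem measurableSet_Ioi] with s (hs : 0 < s)
    exact mul_nonneg hM (setIntegral_nonneg measurableSet_Ioi fun x (hx : 0 < x) => by positivity)
  calc ∫ s in Ioc 0 t, ∫ x in Ioi 0, f s x ^ 2 * (x ^ β * exp (-x))
      ≤ ∫ s in Ioc 0 t, M * ∫ x in Ioi 0, (s + x) ^ δ * (x ^ β * exp (-x)) :=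
        integral_mono_of_nonneg (ae_of_all _ fun s =>
            setIntegral_nonneg measurableSet_Ioi fun x (hx : 0 < x) => by positivity)
          (IntegrableOn.mono_set (hint.integral_prod_left.const_mul M) Ioc_subset_Ioi_self) hbound
    _ ≤ ∫ s in Ioi 0, M * ∫ x in Ioi 0, (s + x) ^ δ * (x ^ β * exp (-x)) :=
        setIntegral_mono_set (hint.integral_prod_left.const_mul M) hnonneg
          Ioc_subset_Ioi_self.eventuallyLE
    _ = M * (Gamma (β + δ + 2) / (-δ - 1)) := by
        rw [integral_const_mul, integral_Ioi_integral_Ioi_rpow_add_mul_rpow_mul_exp hδ hβδ]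

theorem stmt12_general (H β p : ℝ)
    (hH : H ∈ Set.Ioo (0:ℝ) (1/2))
    (hp : 1 < p) (hexp : 0 < β + 2*H - 3 + 2/p) :
    ∃ C : ℝ, 0 < C ∧
      (∀ h : ℝ, 0 < h → ∀ s : ℝ, 0 ≤ s → ∀ x : ℝ, 0 < x →
        |(H - 1/2) * (s + h + x) ^ (H - 3/2) - (H - 1/2) * (s + x) ^ (H - 3/2)|
          ≤ C * h ^ (1 - 1/p) * (s + x) ^ (H - 5/2 + 1/p)) ∧
      (∀ h : ℝ, 0 < h → ∀ t : ℝ, 0 < t →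
        (∫ s in Set.Ioc (0:ℝ) t, ∫ x in Set.Ioi (0:ℝ),
            ((H - 1/2) * (s + h + x) ^ (H - 3/2) - (H - 1/2) * (s + x) ^ (H - 3/2)) ^ 2
              * (x ^ β * Real.exp (-x)))
          ≤ C * h ^ (2 - 2/p) * Real.Gamma (β + 2*H - 3 + 2/p)) := by
  obtain ⟨-, hH⟩ := hH
  have hθ₁ : 1 / p ≤ 1 := (div_le_one (by linarith)).2 hp.le
  set C₁ := |H - 1/2| * (3/2 - H) ^ (1 - 1/p)
  have hC₁ : 0 < C₁ := mul_pos (abs_pos.2 (by linarith)) (rpow_pos_of_pos (by linarith) _)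
  have hpt : ∀ h : ℝ, 0 < h → ∀ s : ℝ, 0 ≤ s → ∀ x : ℝ, 0 < x →
      |(H - 1/2) * (s + h + x) ^ (H - 3/2) - (H - 1/2) * (s + x) ^ (H - 3/2)|
        ≤ C₁ * h ^ (1 - 1/p) * (s + x) ^ (H - 5/2 + 1/p) := fun h hh s hs x hx => by
    have := abs_mul_rpow_add_sub_le (H - 1/2) (γ := H - 3/2) (u := s + x) (by linarith)
      (by positivity) hθ₁ (by positivity) hh
    rwa [neg_sub, add_right_comm, show H - 3/2 - 1 + 1/p = H - 5/2 + 1/p by ring] at this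
  set δ := 2 * H - 5 + 2 / p
  have hδ : δ < -1 := by
    linarith [(div_lt_iff₀ (by linarith : (0:ℝ) < p)).2 (by linarith : 2 < 2 * p)]
  refine ⟨max C₁ (C₁ ^ 2 / (-δ - 1)), lt_max_of_lt_left hC₁,
    fun h hh s hs x hx => (hpt h hh s hs x hx).trans (by gcongr; exact le_max_left _ _),
    fun h hh t _ => ?_⟩
  have hsq : ∀ s, 0 < s → ∀ x, 0 < x →
      ((H - 1/2) * (s + h + x) ^ (H - 3/2) - (H - 1/2) * (s + x) ^ (H - 3/2)) ^ 2
        ≤ C₁ ^ 2 * h ^ (2 - 2/p) * (s + x) ^ δ := fun s hs x hx => by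
    rw [← sq_abs, show 2 - 2/p = (1 - 1/p) * (2 : ℕ) by push_cast; ring,
      show δ = (H - 5/2 + 1/p) * (2 : ℕ) by push_cast; ring,
      rpow_mul_natCast hh.le, rpow_mul_natCast (by positivity), ← mul_pow, ← mul_pow]
    exact pow_le_pow_left₀ (abs_nonneg _) (hpt h hh s hs.le x hx) 2
  have hΓ : β + δ + 2 = β + 2*H - 3 + 2/p := by ring
  calc _ ≤ C₁ ^ 2 * h ^ (2 - 2/p) * (Gamma (β + δ + 2) / (-δ - 1)) :=
        integral_Ioc_integral_Ioi_sq_mul_le t (by positivity) hδ (by linarith) hsq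
    _ = C₁ ^ 2 / (-δ - 1) * h ^ (2 - 2/p) * Gamma (β + 2*H - 3 + 2/p) := by rw [hΓ]; ring
    _ ≤ _ := by gcongr; exact le_max_right _ _

/-- for the power-law kernel `K(t) = t^{H−1/2}`, `H ∈ (0,1/2)`, weight
`w(x) = x^β e^{−x}`, `β ∈ (1−2H,1)`, and `p > 1`: there is a constant `C > 0` such that
for all `h > 0`, `s ≥ 0`, `x > 0`,
`|K'(s+h+x) − K'(s+x)| ≤ C h^{1−1/p} (s+x)^{H−5/2+1/p}` (with `K'(u) = (H−1/2)u^{H−3/2}`),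
and consequently, for all `h, t > 0`,
`∫₀^t ‖K'(·+h+s) − K'(·+s)‖²_{L²_w} ds ≤ C h^{2−2/p} Γ(β+2H−3+2/p)`, provided
`β+2H−3+2/p > 0`. -/
theorem stmt12 (H β p : ℝ)
    (hH : H ∈ Set.Ioo (0:ℝ) (1/2)) (hβ : β ∈ Set.Ioo (1 - 2*H) 1)
    (hp : 1 < p) (hexp : 0 < β + 2*H - 3 + 2/p) :
    ∃ C : ℝ, 0 < C ∧
      (∀ h : ℝ, 0 < h → ∀ s : ℝ, 0 ≤ s → ∀ x : ℝ, 0 < x →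
        |(H - 1/2) * (s + h + x) ^ (H - 3/2) - (H - 1/2) * (s + x) ^ (H - 3/2)|
          ≤ C * h ^ (1 - 1/p) * (s + x) ^ (H - 5/2 + 1/p)) ∧
      (∀ h : ℝ, 0 < h → ∀ t : ℝ, 0 < t →
        (∫ s in Set.Ioc (0:ℝ) t, ∫ x in Set.Ioi (0:ℝ),
            ((H - 1/2) * (s + h + x) ^ (H - 3/2) - (H - 1/2) * (s + x) ^ (H - 3/2)) ^ 2
              * (x ^ β * Real.exp (-x)))
          ≤ C * h ^ (2 - 2/p) * Real.Gamma (β + 2*H - 3 + 2/p)) :=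
  stmt12_general H β p hH hp hexp
end
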